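/- arXiv:1609.06102 — 2 statements merged into one kernel-verified Lean document; each statement's English description precedes it below -/
import Mathlib

section
/- Weighted interpolation inequality (Lemma 3.1, measure-theoretic form). Let (X, μ) be a measure space, let δ > 0 be a real number, and let φ : X → ℝ be a measurable function with φ(x) > 0 for μ-almost every x. Then for every measurable function f : X → ℝ one has, as an inequality in the extended nonnegative reals, ‖f‖_{L²(μ)} ≤ (∫⁻ φ(x)^{-δ} dμ)^{1/(2+δ)} · ‖f‖_{L^∞(μ)}^{2/(2+δ)} · ‖f·φ‖_{L²(μ)}^{δ/(2+δ)}. -/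
/-! With `θ = δ / (2 + δ)` one has `|f|² = (|f| φ)^{2θ} (|f|² φ^{-δ})^{1-θ}` pointwise, the powers
of `φ` cancelling. Hölder's inequality with exponents `θ, 1 - θ` bounds `‖f‖₂²` by
`‖f φ‖₂^{2θ} (∫ |f|² φ^{-δ})^{1-θ}`, and `|f|² ≤ ‖f‖∞²` in the last integral. -/

open MeasureTheory ENNReal

theorem ENNReal.rpow_two_eq_weighted_interpolation {a w : ℝ≥0∞} (hw₀ : w ≠ 0) (hw : w ≠ ∞)
    {δ : ℝ} (hδ : 0 ≤ δ) :
    a ^ (2 : ℝ) = ((a * w) ^ (2 : ℝ)) ^ (δ / (2 + δ)) * (a ^ (2 : ℝ) * w ^ (-δ)) ^ (2 / (2 + δ)) := by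
  have h2δ : 0 < 2 + δ := by linarith
  rw [mul_rpow_of_nonneg _ _ zero_le_two, mul_rpow_of_nonneg _ _ (by positivity),
    mul_rpow_of_nonneg _ _ (by positivity), ← rpow_mul, ← rpow_mul, ← rpow_mul, ← rpow_mul,
    mul_mul_mul_comm, ← rpow_add_of_nonneg _ _ (by positivity) (by positivity),
    ← rpow_add _ _ hw₀ hw]
  have ha_exp : 2 * (δ / (2 + δ)) + 2 * (2 / (2 + δ)) = 2 := by field_simp; ring
  have hw_exp : 2 * (δ / (2 + δ)) + -δ * (2 / (2 + δ)) = 0 := by field_simp; ring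
  rw [ha_exp, hw_exp, rpow_zero, mul_one]

section

variable {X : Type*} [MeasurableSpace X] {μ : Measure X}

theorem lintegral_rpow_two_le_weighted_interpolation {F w : X → ℝ≥0∞}
    (hF : AEMeasurable F μ) (hw : AEMeasurable w μ) (hw₀ : ∀ᵐ x ∂μ, w x ≠ 0)
    (hw_top : ∀ᵐ x ∂μ, w x ≠ ∞) {δ : ℝ} (hδ : 0 ≤ δ) :
    ∫⁻ x, F x ^ (2 : ℝ) ∂μ ≤ (∫⁻ x, (F x * w x) ^ (2 : ℝ) ∂μ) ^ (δ / (2 + δ)) *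
      (∫⁻ x, F x ^ (2 : ℝ) * w x ^ (-δ) ∂μ) ^ (2 / (2 + δ)) := by
  have h2δ : 0 < 2 + δ := by linarith
  calc ∫⁻ x, F x ^ (2 : ℝ) ∂μ
      = ∫⁻ x, ((F x * w x) ^ (2 : ℝ)) ^ (δ / (2 + δ)) *
          (F x ^ (2 : ℝ) * w x ^ (-δ)) ^ (2 / (2 + δ)) ∂μ := by
        refine lintegral_congr_ae ?_
        filter_upwards [hw₀, hw_top] with x hx₀ hx
        exact rpow_two_eq_weighted_interpolation hx₀ hx hδ
    _ ≤ _ := lintegral_mul_norm_pow_le ((hF.mul hw).pow_const _)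
        ((hF.pow_const _).mul (hw.pow_const _)) (by positivity) (by positivity)
        (by field_simp; ring)

theorem lintegral_enorm_rpow_two_mul_le {E : Type*} [NormedAddCommGroup E] (f : X → E)
    {g : X → ℝ≥0∞} (hg : AEMeasurable g μ) :
    ∫⁻ x, ‖f x‖ₑ ^ (2 : ℝ) * g x ∂μ ≤ eLpNorm f ∞ μ ^ (2 : ℝ) * ∫⁻ x, g x ∂μ := by
  rw [← lintegral_const_mul'' _ hg]
  refine lintegral_mono_ae ?_
  filter_upwards [enorm_ae_le_eLpNormEssSup f μ] with x hx
  rw [eLpNorm_exponent_top]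
  gcongr

theorem eLpNorm_two_rpow_two {E : Type*} [NormedAddCommGroup E] (f : X → E) :
    eLpNorm f 2 μ ^ (2 : ℝ) = ∫⁻ x, ‖f x‖ₑ ^ (2 : ℝ) ∂μ := by
  simpa using eLpNorm_nnreal_pow_eq_lintegral (f := f) (μ := μ) (p := 2) two_ne_zero

end

theorem weighted_interpolation_inequality
    {X : Type*} [MeasurableSpace X] (μ : Measure X)
    (δ : ℝ) (hδ : 0 < δ)
    (φ : X → ℝ) (hφ : Measurable φ) (hφpos : ∀ᵐ x ∂μ, 0 < φ x)
    (f : X → ℝ) (hf : Measurable f) :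
    eLpNorm f 2 μ ≤
      (∫⁻ x, ENNReal.ofReal (φ x ^ (-δ)) ∂μ) ^ (1 / (2 + δ)) *
        eLpNorm f ∞ μ ^ (2 / (2 + δ)) *
          eLpNorm (fun x => f x * φ x) 2 μ ^ (δ / (2 + δ)) := by
  have h2δ : 0 < 2 + δ := by linarith
  have hweight : ∫⁻ x, ENNReal.ofReal (φ x ^ (-δ)) ∂μ = ∫⁻ x, ‖φ x‖ₑ ^ (-δ) ∂μ := by
    refine lintegral_congr_ae ?_
    filter_upwards [hφpos] with x hx
    rw [Real.enorm_eq_ofReal hx.le, ofReal_rpow_of_pos hx]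
  have hinterp := lintegral_rpow_two_le_weighted_interpolation hf.enorm.aemeasurable
    hφ.enorm.aemeasurable (hφpos.mono fun x hx => enorm_ne_zero.mpr hx.ne')
    (ae_of_all _ fun x => enorm_ne_top) hδ.le
  rw [← rpow_le_rpow_iff (z := 2) two_pos, eLpNorm_two_rpow_two]
  calc ∫⁻ x, ‖f x‖ₑ ^ (2 : ℝ) ∂μ
      ≤ (eLpNorm (fun x => f x * φ x) 2 μ ^ (2 : ℝ)) ^ (δ / (2 + δ)) *
          (eLpNorm f ∞ μ ^ (2 : ℝ) * ∫⁻ x, ENNReal.ofReal (φ x ^ (-δ)) ∂μ) ^ (2 / (2 + δ)) := by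
        rw [eLpNorm_two_rpow_two, hweight]
        simp only [enorm_mul]
        grw [hinterp, lintegral_enorm_rpow_two_mul_le f (hφ.enorm.pow_const _).aemeasurable]
    _ = _ := by
        rw [mul_rpow_of_nonneg _ _ (by positivity), mul_rpow_of_nonneg _ _ zero_le_two,
          mul_rpow_of_nonneg _ _ zero_le_two]
        simp only [← rpow_mul]
        rw [show 2 * (2 / (2 + δ)) = 2 / (2 + δ) * 2 by ring,
          show 1 / (2 + δ) * 2 = 2 / (2 + δ) by ring, mul_comm (2 : ℝ) (δ / (2 + δ))]
        ring
end

section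
/- Pointwise differential inequality satisfied by the squared modulus of a solution of a second-order elliptic equation with complex zero-order coefficient (the key computation in the first step of the proof of Proposition 3.1). Let Ω ⊆ ℝⁿ be an open set, let a : Ω → (n×n real symmetric matrices) have continuously differentiable entries with a(x) positive semidefinite for every x ∈ Ω, let b : Ω → ℝⁿ and d : Ω → ℂ be continuous, and let v, w : Ω → ℝ be twice continuously differentiable. Write u = v + i w and suppose that for every x ∈ Ω the equation ∑_j ∂_j(∑_i a_{ij} ∂_i u)(x) + b(x)·∇u(x) + d(x) u(x) = 0 holds (equivalently, its real and imaginary parts hold: ∑_j ∂_j(∑_i a_{ij} ∂_i v) + b·∇v + Re(d)v − Im(d)w = 0 and ∑_j ∂_j(∑_i a_{ij} ∂_i w) + b·∇w + Re(d)w + Im(d)v = 0 on Ω). Then for every x ∈ Ω, ∑_j ∂_j(∑_i a_{ij} ∂_i |u|²)(x) + b(x)·∇|u|²(x) + 2|d(x)| |u(x)|² ≥ 2 ∑_{i,j} a_{ij}(x) ∂_i v(x) ∂_j v(x) + 2 ∑_{i,j} a_{ij}(x) ∂_i w(x) ∂_j w(x) ≥ 0. -/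
/-!
Writing `L f = ∑ⱼ ∂ⱼ(∑ᵢ aᵢⱼ ∂ᵢ f) + b·∇f`, the product rule gives
`L(f²) = 2 f L f + 2 ∑ᵢⱼ aᵢⱼ ∂ᵢf ∂ⱼf`. Applied to `v` and `w` and added, the equation `L u = -d u`
turns `2 v L v + 2 w L w` into `-2 Re(d) |u|² ≥ -2 |d| |u|²`, while the gradient terms are
nonnegative because `a` is positive semidefinite.
-/

open Filter Topology

/-- The `i`-th partial derivative of a function on `EuclideanSpace ℝ (Fin n)`. -/
noncomputable def pd {n : ℕ} (f : EuclideanSpace ℝ (Fin n) → ℝ) (i : Fin n)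
    (x : EuclideanSpace ℝ (Fin n)) : ℝ :=
  fderiv ℝ f x (EuclideanSpace.single i 1)

variable {n : ℕ} {f g : EuclideanSpace ℝ (Fin n) → ℝ} {i : Fin n} {x : EuclideanSpace ℝ (Fin n)}

lemma pd_congr (h : f =ᶠ[𝓝 x] g) : pd f i x = pd g i x := by
  unfold pd; rw [h.fderiv_eq]

lemma pd_add (hf : DifferentiableAt ℝ f x) (hg : DifferentiableAt ℝ g x) :
    pd (fun y => f y + g y) i x = pd f i x + pd g i x := by
  simp [pd, fderiv_fun_add hf hg]

lemma pd_mul (hf : DifferentiableAt ℝ f x) (hg : DifferentiableAt ℝ g x) :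
    pd (fun y => f y * g y) i x = f x * pd g i x + g x * pd f i x := by
  simp [pd, fderiv_fun_mul hf hg]

lemma pd_const_mul (c : ℝ) (hf : DifferentiableAt ℝ f x) :
    pd (fun y => c * f y) i x = c * pd f i x := by
  simp [pd, fderiv_const_mul hf]

lemma pd_sq (hf : DifferentiableAt ℝ f x) :
    pd (fun y => f y ^ 2) i x = 2 * f x * pd f i x := by
  simp only [sq, pd_mul hf hf]
  ring

lemma ContDiffAt.differentiableAt_pd (hf : ContDiffAt ℝ 2 f x) :
    DifferentiableAt ℝ (pd f i) x :=
  ((hf.fderiv_right (by norm_num)).differentiableAt one_ne_zero).clm_apply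
    (differentiableAt_const _)

noncomputable def ellipticOp (a : EuclideanSpace ℝ (Fin n) → Matrix (Fin n) (Fin n) ℝ)
    (b : EuclideanSpace ℝ (Fin n) → Fin n → ℝ) (f : EuclideanSpace ℝ (Fin n) → ℝ)
    (x : EuclideanSpace ℝ (Fin n)) : ℝ :=
  (∑ j, pd (fun y => ∑ i, a y i j * pd f i y) j x) + ∑ i, b x i * pd f i x

section ellipticOp

variable {a : EuclideanSpace ℝ (Fin n) → Matrix (Fin n) (Fin n) ℝ}
  (b : EuclideanSpace ℝ (Fin n) → Fin n → ℝ)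

lemma differentiableAt_flux (ha : ∀ i j, ContDiffAt ℝ 1 (fun y => a y i j) x)
    (hf : ContDiffAt ℝ 2 f x) (j : Fin n) :
    DifferentiableAt ℝ (fun y => ∑ i, a y i j * pd f i y) x :=
  DifferentiableAt.fun_sum fun i _ =>
    ((ha i j).differentiableAt one_ne_zero).fun_mul hf.differentiableAt_pd

lemma ellipticOp_add (ha : ∀ i j, ContDiffAt ℝ 1 (fun y => a y i j) x)
    (hf : ContDiffAt ℝ 2 f x) (hg : ContDiffAt ℝ 2 g x) :
    ellipticOp a b (fun y => f y + g y) x = ellipticOp a b f x + ellipticOp a b g x := by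
  have hflux (j : Fin n) : (fun y => ∑ i, a y i j * pd (fun z => f z + g z) i y) =ᶠ[𝓝 x]
      fun y => (∑ i, a y i j * pd f i y) + ∑ i, a y i j * pd g i y := by
    filter_upwards [hf.eventually (by simp), hg.eventually (by simp)] with y hfy hgy
    simp only [pd_add (hfy.differentiableAt two_ne_zero) (hgy.differentiableAt two_ne_zero),
      mul_add, Finset.sum_add_distrib]
  simp only [ellipticOp, pd_congr (hflux _),
    pd_add (differentiableAt_flux ha hf _) (differentiableAt_flux ha hg _),
    pd_add (hf.differentiableAt two_ne_zero) (hg.differentiableAt two_ne_zero),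
    mul_add, Finset.sum_add_distrib]
  ring

lemma ellipticOp_sq (ha : ∀ i j, ContDiffAt ℝ 1 (fun y => a y i j) x)
    (hf : ContDiffAt ℝ 2 f x) :
    ellipticOp a b (fun y => f y ^ 2) x =
      2 * f x * ellipticOp a b f x + 2 * ∑ i, ∑ j, a x i j * pd f i x * pd f j x := by
  have hfx : DifferentiableAt ℝ f x := hf.differentiableAt two_ne_zero
  have hflux (j : Fin n) : (fun y => ∑ i, a y i j * pd (fun z => f z ^ 2) i y) =ᶠ[𝓝 x]
      fun y => 2 * (f y * ∑ i, a y i j * pd f i y) := by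
    filter_upwards [hf.eventually (by simp)] with y hfy
    simp only [pd_sq (hfy.differentiableAt two_ne_zero), Finset.mul_sum]
    exact Finset.sum_congr rfl fun i _ => by ring
  have hdiv (j : Fin n) : pd (fun y => ∑ i, a y i j * pd (fun z => f z ^ 2) i y) j x =
      2 * (f x * pd (fun y => ∑ i, a y i j * pd f i y) j x +
        (∑ i, a x i j * pd f i x) * pd f j x) := by
    rw [pd_congr (hflux j), pd_const_mul _ (hfx.fun_mul (differentiableAt_flux ha hf j)),
      pd_mul hfx (differentiableAt_flux ha hf j)]
  simp only [ellipticOp, hdiv, pd_sq hfx]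
  rw [Finset.sum_comm (f := fun i j => a x i j * pd f i x * pd f j x)]
  simp only [mul_add, Finset.mul_sum, Finset.sum_mul, Finset.sum_add_distrib]
  ring_nf

end ellipticOp

theorem squared_modulus_supersolution_general
    {n : ℕ} (Ω : Set (EuclideanSpace ℝ (Fin n))) (hΩ : IsOpen Ω)
    (a : EuclideanSpace ℝ (Fin n) → Matrix (Fin n) (Fin n) ℝ)
    (ha_C1 : ∀ i j, ContDiffOn ℝ 1 (fun x => a x i j) Ω)
    (ha_psd : ∀ x ∈ Ω, ∀ ξ : Fin n → ℝ, 0 ≤ ∑ i, ∑ j, a x i j * ξ i * ξ j)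
    (b : EuclideanSpace ℝ (Fin n) → Fin n → ℝ)
    (d : EuclideanSpace ℝ (Fin n) → ℂ)
    (v w : EuclideanSpace ℝ (Fin n) → ℝ)
    (hv : ContDiffOn ℝ 2 v Ω) (hw : ContDiffOn ℝ 2 w Ω)
    (heq_re : ∀ x ∈ Ω,
      (∑ j, pd (fun y => ∑ i, a y i j * pd v i y) j x) +
        (∑ i, b x i * pd v i x) + (d x).re * v x - (d x).im * w x = 0)
    (heq_im : ∀ x ∈ Ω,
      (∑ j, pd (fun y => ∑ i, a y i j * pd w i y) j x) +
        (∑ i, b x i * pd w i x) + (d x).re * w x + (d x).im * v x = 0) :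
    ∀ x ∈ Ω,
      (2 * ∑ i, ∑ j, a x i j * pd v i x * pd v j x) +
          (2 * ∑ i, ∑ j, a x i j * pd w i x * pd w j x) ≤
        (∑ j, pd (fun y => ∑ i, a y i j * pd (fun z => v z ^ 2 + w z ^ 2) i y) j x) +
          (∑ i, b x i * pd (fun z => v z ^ 2 + w z ^ 2) i x) +
            2 * ‖d x‖ * (v x ^ 2 + w x ^ 2) ∧
      0 ≤ (2 * ∑ i, ∑ j, a x i j * pd v i x * pd v j x) +
            (2 * ∑ i, ∑ j, a x i j * pd w i x * pd w j x) := by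
  intro x hx
  have ha : ∀ i j, ContDiffAt ℝ 1 (fun y => a y i j) x :=
    fun i j => (ha_C1 i j).contDiffAt (hΩ.mem_nhds hx)
  have hvx : ContDiffAt ℝ 2 v x := hv.contDiffAt (hΩ.mem_nhds hx)
  have hwx : ContDiffAt ℝ 2 w x := hw.contDiffAt (hΩ.mem_nhds hx)
  have hL : ellipticOp a b (fun z => v z ^ 2 + w z ^ 2) x =
      2 * v x * ellipticOp a b v x + 2 * ∑ i, ∑ j, a x i j * pd v i x * pd v j x +
        (2 * w x * ellipticOp a b w x + 2 * ∑ i, ∑ j, a x i j * pd w i x * pd w j x) := by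
    rw [ellipticOp_add b ha (hvx.pow 2) (hwx.pow 2), ellipticOp_sq b ha hvx,
      ellipticOp_sq b ha hwx]
  have hLv : ellipticOp a b v x = (d x).im * w x - (d x).re * v x := by
    unfold ellipticOp
    linear_combination heq_re x hx
  have hLw : ellipticOp a b w x = -(d x).re * w x - (d x).im * v x := by
    unfold ellipticOp
    linear_combination heq_im x hx
  have hd_re : 0 ≤ (‖d x‖ - (d x).re) * (v x ^ 2 + w x ^ 2) :=
    mul_nonneg (sub_nonneg.mpr (Complex.re_le_norm _)) (by positivity)
  have hQv := ha_psd x hx fun i => pd v i x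
  have hQw := ha_psd x hx fun i => pd w i x
  refine ⟨?_, by linarith⟩
  change _ ≤ ellipticOp a b (fun z => v z ^ 2 + w z ^ 2) x + _
  rw [hL, hLv, hLw]
  linarith

theorem squared_modulus_supersolution
    {n : ℕ} (Ω : Set (EuclideanSpace ℝ (Fin n))) (hΩ : IsOpen Ω)
    (a : EuclideanSpace ℝ (Fin n) → Matrix (Fin n) (Fin n) ℝ)
    (ha_C1 : ∀ i j, ContDiffOn ℝ 1 (fun x => a x i j) Ω)
    (ha_symm : ∀ x ∈ Ω, ∀ i j, a x i j = a x j i)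
    (ha_psd : ∀ x ∈ Ω, ∀ ξ : Fin n → ℝ, 0 ≤ ∑ i, ∑ j, a x i j * ξ i * ξ j)
    (b : EuclideanSpace ℝ (Fin n) → Fin n → ℝ)
    (hb : ∀ i, ContinuousOn (fun x => b x i) Ω)
    (d : EuclideanSpace ℝ (Fin n) → ℂ) (hd : ContinuousOn d Ω)
    (v w : EuclideanSpace ℝ (Fin n) → ℝ)
    (hv : ContDiffOn ℝ 2 v Ω) (hw : ContDiffOn ℝ 2 w Ω)
    (heq_re : ∀ x ∈ Ω,
      (∑ j, pd (fun y => ∑ i, a y i j * pd v i y) j x) +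
        (∑ i, b x i * pd v i x) + (d x).re * v x - (d x).im * w x = 0)
    (heq_im : ∀ x ∈ Ω,
      (∑ j, pd (fun y => ∑ i, a y i j * pd w i y) j x) +
        (∑ i, b x i * pd w i x) + (d x).re * w x + (d x).im * v x = 0) :
    ∀ x ∈ Ω,
      (2 * ∑ i, ∑ j, a x i j * pd v i x * pd v j x) +
          (2 * ∑ i, ∑ j, a x i j * pd w i x * pd w j x) ≤
        (∑ j, pd (fun y => ∑ i, a y i j * pd (fun z => v z ^ 2 + w z ^ 2) i y) j x) +
          (∑ i, b x i * pd (fun z => v z ^ 2 + w z ^ 2) i x) +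
            2 * ‖d x‖ * (v x ^ 2 + w x ^ 2) ∧
      0 ≤ (2 * ∑ i, ∑ j, a x i j * pd v i x * pd v j x) +
            (2 * ∑ i, ∑ j, a x i j * pd w i x * pd w j x) :=
  squared_modulus_supersolution_general Ω hΩ a ha_C1 ha_psd b d v w hv hw heq_re heq_im
end
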